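/- arXiv:2008.09944 — 7 statements merged into one kernel-verified Lean document; each statement's English description precedes it below -/
import Mathlib

section
/- Let F be a finite field and let k, n, d be positive integers with d ≤ k. Let M be a set of k × n matrices over F such that rank(A − B) ≥ d for all distinct A, B ∈ M. For A ∈ M let U_A ⊆ F^{k+n} be the row space of the k × (k+n) block matrix (I_k | A), where I_k is the k × k identity matrix. Then each U_A is a k-dimensional subspace of F^{k+n}, the map A ↦ U_A is injective on M, and dim(U_A ∩ U_B) ≤ k − d for all distinct A, B ∈ M; consequently {U_A : A ∈ M} is a set of |M| k-dimensional subspaces of F^{k+n} with pairwise subspace distance at least 2d. -/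
open Matrix

/-- The row space of a matrix: the span of its rows, i.e. the range of `vecMul`. -/
noncomputable def rowSpace {F : Type*} [Field F] {m n : Type*} [Fintype m]
    (A : Matrix m n F) : Submodule F (n → F) :=
  LinearMap.range A.vecMulLinear

/-- The lifted generator matrix `(I_k | A)`. -/
def liftMat {F : Type*} [Field F] {k n : ℕ} (A : Matrix (Fin k) (Fin n) F) :
    Matrix (Fin k) (Fin k ⊕ Fin n) F :=
  Matrix.fromCols (1 : Matrix (Fin k) (Fin k) F) A

/-! `x ↦ x (I | A) = (x, xA)` is an isomorphism `F^k ≃ U_A`, and `(x, xA)` lies in `U_B` exactly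
when `x (A - B) = 0`. Hence `U_A ∩ U_B` is the image of the left kernel of `A - B`, and
rank–nullity gives `dim (U_A ∩ U_B) = k - rank (A - B)`. -/

theorem Matrix.finrank_ker_vecMulLinear {F m n : Type*} [Field F] [Fintype m] [Fintype n]
    (A : Matrix m n F) :
    Module.finrank F (LinearMap.ker A.vecMulLinear) = Fintype.card m - A.rank := by
  have h := LinearMap.finrank_range_add_finrank_ker A.vecMulLinear
  have hrange : Module.finrank F (LinearMap.range A.vecMulLinear) = A.rank := by
    rw [← Matrix.rank_transpose, Matrix.rank, Matrix.mulVecLin_transpose]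
  rw [hrange, Module.finrank_fintype_fun_eq_card] at h
  omega

section Lift

variable {F : Type*} [Field F] {k n : ℕ}

theorem vecMul_liftMat (A : Matrix (Fin k) (Fin n) F) (x : Fin k → F) :
    x ᵥ* liftMat A = Sum.elim x (x ᵥ* A) := by
  rw [liftMat, vecMul_fromCols, vecMul_one]

theorem vecMulLinear_liftMat_injective (A : Matrix (Fin k) (Fin n) F) :
    Function.Injective (liftMat A).vecMulLinear := by
  intro x y hxy
  simpa [vecMul_liftMat] using congrArg (· ∘ Sum.inl) hxy

theorem mem_rowSpace_liftMat_iff (A : Matrix (Fin k) (Fin n) F) (v : Fin k ⊕ Fin n → F) :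
    v ∈ rowSpace (liftMat A) ↔ v ∘ Sum.inr = (v ∘ Sum.inl) ᵥ* A := by
  constructor
  · rintro ⟨x, rfl⟩
    simp [vecMul_liftMat]
  · intro hv
    refine ⟨v ∘ Sum.inl, ?_⟩
    ext (i | j)
    · simp [vecMul_liftMat]
    · simp [vecMul_liftMat, ← hv]

theorem finrank_rowSpace_liftMat (A : Matrix (Fin k) (Fin n) F) :
    Module.finrank F (rowSpace (liftMat A)) = k := by
  rw [rowSpace, LinearMap.finrank_range_of_inj (vecMulLinear_liftMat_injective A),
    Module.finrank_fintype_fun_eq_card, Fintype.card_fin]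

theorem rowSpace_liftMat_injective :
    Function.Injective (fun A : Matrix (Fin k) (Fin n) F => rowSpace (liftMat A)) := by
  intro A B hAB
  ext i j
  have hmem : Pi.single i 1 ᵥ* liftMat A ∈ rowSpace (liftMat B) :=
    (show rowSpace (liftMat A) = rowSpace (liftMat B) from hAB) ▸ ⟨Pi.single i 1, rfl⟩
  rw [vecMul_liftMat, mem_rowSpace_liftMat_iff, Sum.elim_comp_inr, Sum.elim_comp_inl,
    single_one_vecMul, single_one_vecMul] at hmem
  exact congrFun hmem j

theorem rowSpace_liftMat_inf_eq_map_ker (A B : Matrix (Fin k) (Fin n) F) :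
    rowSpace (liftMat A) ⊓ rowSpace (liftMat B) =
      (LinearMap.ker (A - B).vecMulLinear).map (liftMat A).vecMulLinear := by
  ext v
  simp only [Submodule.mem_inf, Submodule.mem_map, LinearMap.mem_ker, vecMulLinear_apply]
  constructor
  · rintro ⟨⟨x, rfl⟩, hvB⟩
    rw [mem_rowSpace_liftMat_iff] at hvB
    refine ⟨x, ?_, rfl⟩
    simp_all [vecMul_liftMat, vecMul_sub]
  · rintro ⟨x, hx, rfl⟩
    refine ⟨⟨x, rfl⟩, ?_⟩
    rw [mem_rowSpace_liftMat_iff]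
    simpa [vecMul_liftMat, vecMul_sub, sub_eq_zero] using hx

theorem finrank_rowSpace_liftMat_inf (A B : Matrix (Fin k) (Fin n) F) :
    Module.finrank F ↥(rowSpace (liftMat A) ⊓ rowSpace (liftMat B)) = k - (A - B).rank := by
  rw [rowSpace_liftMat_inf_eq_map_ker, ← LinearEquiv.finrank_eq
    (Submodule.equivMapOfInjective _ (vecMulLinear_liftMat_injective A) _),
    finrank_ker_vecMulLinear, Fintype.card_fin]

end Lift

theorem lifted_rank_metric_code_is_CDC_general
    (F : Type*) [Field F] (k n d : ℕ)
    (M : Set (Matrix (Fin k) (Fin n) F))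
    (hM : ∀ A ∈ M, ∀ B ∈ M, A ≠ B → d ≤ (A - B).rank) :
    (∀ A ∈ M, Module.finrank F ↥(rowSpace (liftMat A)) = k) ∧
    (∀ A ∈ M, ∀ B ∈ M, rowSpace (liftMat A) = rowSpace (liftMat B) → A = B) ∧
    (∀ A ∈ M, ∀ B ∈ M, A ≠ B →
      Module.finrank F ↥(rowSpace (liftMat A) ⊓ rowSpace (liftMat B)) ≤ k - d) ∧
    (∀ A ∈ M, ∀ B ∈ M, A ≠ B →
      2 * d ≤ 2 * k - 2 * Module.finrank F ↥(rowSpace (liftMat A) ⊓ rowSpace (liftMat B))) := by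
  refine ⟨fun A _ => finrank_rowSpace_liftMat A,
    fun A _ B _ hAB => rowSpace_liftMat_injective hAB, fun A hA B hB hAB => ?_,
    fun A hA B hB hAB => ?_⟩ <;>
  · have hd := hM A hA B hB hAB
    have hrank := rank_le_height (A - B)
    rw [finrank_rowSpace_liftMat_inf]
    omega

/-- lifting a rank-metric code of minimum rank distance `d` gives a
constant dimension code of dimension `k` and subspace distance at least `2d`. -/
theorem lifted_rank_metric_code_is_CDC
    (F : Type*) [Field F] [Fintype F] (k n d : ℕ)
    (hk : 0 < k) (hn : 0 < n) (hd : 0 < d) (hdk : d ≤ k)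
    (M : Set (Matrix (Fin k) (Fin n) F))
    (hM : ∀ A ∈ M, ∀ B ∈ M, A ≠ B → d ≤ (A - B).rank) :
    (∀ A ∈ M, Module.finrank F ↥(rowSpace (liftMat A)) = k) ∧
    (∀ A ∈ M, ∀ B ∈ M, rowSpace (liftMat A) = rowSpace (liftMat B) → A = B) ∧
    (∀ A ∈ M, ∀ B ∈ M, A ≠ B →
      Module.finrank F ↥(rowSpace (liftMat A) ⊓ rowSpace (liftMat B)) ≤ k - d) ∧
    (∀ A ∈ M, ∀ B ∈ M, A ≠ B →
      2 * d ≤ 2 * k - 2 * Module.finrank F ↥(rowSpace (liftMat A) ⊓ rowSpace (liftMat B))) :=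
  lifted_rank_metric_code_is_CDC_general F k n d M hM
end

section
/- Let F be a finite field, let d be an even positive integer, and let n, n1, n2, k be positive integers with n1 ≥ k, n2 ≥ k and n = n1 + n2. Let G1 be a set of k × n1 matrices over F of rank k whose row spaces are pairwise distinct and satisfy dim(R(G) ∩ R(G')) ≤ k − d/2 for all distinct G, G' ∈ G1, and let G2 be a set of k × n2 matrices of rank k with the same property. Let M2 be a set of k × n2 matrices with rank(M − M') ≥ d/2 for all distinct M, M' ∈ M2, and let M1 be a set of k × n1 matrices with rank(M − M') ≥ d/2 for all distinct M, M' ∈ M1 and with rank(M) ≤ k − d/2 for every M ∈ M1. Then C = { R(G | M) : G ∈ G1, M ∈ M2 } ∪ { R(M | G) : M ∈ M1, G ∈ G2 } is a set of k-dimensional subspaces of F^n satisfying dim(U ∩ V) ≤ k − d/2 for all distinct U, V ∈ C, and |C| = |G1|·|M2| + |M1|·|G2|. -/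
open Matrix

/-!
Since `G` has full row rank, the projection onto the `G`-columns maps the codeword `R(G | M)`
isomorphically onto `R(G)`. So two codewords with different `G`-blocks meet in no more than their
`G`-blocks do; two codewords `R(G | M)`, `R(G | M')` meet inside the image of the kernel of
`v ↦ v (M - M')`, of dimension `k - rank (M - M')`; and `R(G | M) ⊓ R(M' | G')` projects
injectively into `R(M')`, whose dimension is `rank M' ≤ k - d / 2 < k`. The same injectivity makes
`(G, M) ↦ R(G | M)` injective on each half, and the last bound makes the two halves disjoint.
-/

open Module Function
open LinearMap (funLeft)

namespace Matrix

variable {R ι m₁ m₂ : Type*}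

@[simp]
theorem fromCols_submatrix_inl (A : Matrix ι m₁ R) (B : Matrix ι m₂ R) :
    (fromCols A B).submatrix id Sum.inl = A := rfl

@[simp]
theorem fromCols_submatrix_inr (A : Matrix ι m₁ R) (B : Matrix ι m₂ R) :
    (fromCols A B).submatrix id Sum.inr = B := rfl

end Matrix

/-- For even `d`, the subspace distance `2k - 2 dim (U ⊓ W) ≥ d` reads `dim (U ⊓ W) ≤ k - d / 2`. -/
def IsConstantDimensionCode {F V : Type*} [Field F] [AddCommGroup V] [Module F V]
    (C : Set (Submodule F V)) (k d : ℕ) : Prop :=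
  (∀ U ∈ C, finrank F U = k) ∧ ∀ U ∈ C, ∀ W ∈ C, U ≠ W → finrank F ↥(U ⊓ W) ≤ k - d / 2

namespace IsConstantDimensionCode

variable {F V : Type*} [Field F] [AddCommGroup V] [Module F V] {C₁ C₂ : Set (Submodule F V)}
  {k d : ℕ}

theorem union (h₁ : IsConstantDimensionCode C₁ k d) (h₂ : IsConstantDimensionCode C₂ k d)
    (hcross : ∀ U ∈ C₁, ∀ W ∈ C₂, finrank F ↥(U ⊓ W) ≤ k - d / 2) :
    IsConstantDimensionCode (C₁ ∪ C₂) k d := by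
  refine ⟨fun U hU => hU.elim (h₁.1 U) (h₂.1 U), ?_⟩
  rintro U (hU | hU) W (hW | hW) hUW
  exacts [h₁.2 U hU W hW hUW, hcross U hU W hW, inf_comm U W ▸ hcross W hW U hU,
    h₂.2 U hU W hW hUW]

theorem disjoint (h₁ : IsConstantDimensionCode C₁ k d)
    (hcross : ∀ U ∈ C₁, ∀ W ∈ C₂, finrank F ↥(U ⊓ W) ≤ k - d / 2) (hk : 0 < k) (hd : 2 ≤ d) :
    Disjoint C₁ C₂ := by
  refine Set.disjoint_left.2 fun U hU₁ hU₂ => ?_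
  have hle := hcross U hU₁ U hU₂
  rw [inf_idem, h₁.1 U hU₁] at hle
  omega

end IsConstantDimensionCode

section

variable {F ι m m' n : Type*} [Field F] [Fintype ι]

theorem finrank_rowSpace [Fintype n] (A : Matrix ι n F) : finrank F (rowSpace A) = A.rank := by
  rw [rowSpace, range_vecMulLinear, rank_eq_finrank_span_row]

theorem injective_vecMul_of_rank_eq [Fintype n] {A : Matrix ι n F} (h : A.rank = Fintype.card ι) :
    Injective A.vecMul := by
  rw [vecMul_injective_iff, linearIndependent_iff_card_eq_finrank_span, ← h,
    rank_eq_finrank_span_row]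
  rfl

theorem funLeft_comp_vecMulLinear (A : Matrix ι n F) (e : m → n) :
    funLeft F F e ∘ₗ A.vecMulLinear = (A.submatrix id e).vecMulLinear := by
  ext v j
  simp [LinearMap.funLeft_apply, vecMul, dotProduct]

theorem map_funLeft_rowSpace (A : Matrix ι n F) (e : m → n) :
    (rowSpace A).map (funLeft F F e) = rowSpace (A.submatrix id e) := by
  rw [rowSpace, rowSpace, ← LinearMap.range_comp, funLeft_comp_vecMulLinear]

variable {e : m → n} {A A' : Matrix ι n F}

theorem injective_vecMul_of_submatrix (hA : Injective (A.submatrix id e).vecMul) :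
    Injective A.vecMul := by
  refine Injective.of_comp (f := funLeft F F e) ?_
  show Injective (funLeft F F e ∘ A.vecMulLinear)
  rwa [← LinearMap.coe_comp, funLeft_comp_vecMulLinear]

theorem finrank_rowSpace_of_injective_submatrix (hA : Injective (A.submatrix id e).vecMul) :
    finrank F (rowSpace A) = Fintype.card ι :=
  (LinearMap.finrank_range_of_inj (injective_vecMul_of_submatrix hA)).trans
    (finrank_fintype_fun_eq_card F)

theorem injOn_funLeft_rowSpace (hA : Injective (A.submatrix id e).vecMul) :
    Set.InjOn (funLeft F F e) (rowSpace A) := by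
  rintro _ ⟨v, rfl⟩ _ ⟨w, rfl⟩ hvw
  simp only [← LinearMap.comp_apply, funLeft_comp_vecMulLinear] at hvw
  rw [hA hvw]

theorem finrank_map_funLeft_of_le_rowSpace (hA : Injective (A.submatrix id e).vecMul)
    {W : Submodule F (n → F)} (hW : W ≤ rowSpace A) :
    finrank F (W.map (funLeft F F e)) = finrank F W := by
  rw [← LinearMap.range_domRestrict]
  exact LinearMap.finrank_range_of_inj <| LinearMap.injective_domRestrict_iff.2 <|
    LinearMap.disjoint_ker_iff_injOn.2 <| (injOn_funLeft_rowSpace hA).mono hW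

theorem finrank_inf_rowSpace_le_submatrix [Fintype m] (hA : Injective (A.submatrix id e).vecMul)
    (B : Matrix ι n F) :
    finrank F ↥(rowSpace A ⊓ rowSpace B) ≤
      finrank F ↥(rowSpace (A.submatrix id e) ⊓ rowSpace (B.submatrix id e)) := by
  rw [← finrank_map_funLeft_of_le_rowSpace hA inf_le_left, ← map_funLeft_rowSpace,
    ← map_funLeft_rowSpace]
  exact Submodule.finrank_mono (Submodule.map_inf_le _)

theorem finrank_inf_rowSpace_le_rank_submatrix [Fintype m]
    (hA : Injective (A.submatrix id e).vecMul) (B : Matrix ι n F) :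
    finrank F ↥(rowSpace A ⊓ rowSpace B) ≤ (B.submatrix id e).rank :=
  (finrank_inf_rowSpace_le_submatrix hA B).trans <|
    (Submodule.finrank_mono inf_le_right).trans (finrank_rowSpace _).le

theorem inf_rowSpace_le_map_ker (hA : Injective (A.submatrix id e).vecMul)
    (hAA' : A.submatrix id e = A'.submatrix id e) :
    rowSpace A ⊓ rowSpace A' ≤ (LinearMap.ker (A - A').vecMulLinear).map A.vecMulLinear := by
  rintro _ ⟨⟨v, rfl⟩, ⟨w, hw⟩⟩
  have hwv := congrArg (funLeft F F e) hw
  rw [← LinearMap.comp_apply, ← LinearMap.comp_apply, funLeft_comp_vecMulLinear,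
    funLeft_comp_vecMulLinear, ← hAA'] at hwv
  obtain rfl := hA hwv
  refine ⟨_, ?_, rfl⟩
  simp [hw]

theorem finrank_inf_rowSpace_le_of_submatrix_eq [Fintype n]
    (hA : Injective (A.submatrix id e).vecMul)
    (hAA' : A.submatrix id e = A'.submatrix id e) :
    finrank F ↥(rowSpace A ⊓ rowSpace A') ≤ Fintype.card ι - (A - A').rank := by
  have hker := (A - A').vecMulLinear.finrank_range_add_finrank_ker
  rw [← rowSpace, finrank_rowSpace, finrank_fintype_fun_eq_card] at hker
  calc finrank F ↥(rowSpace A ⊓ rowSpace A')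
      ≤ finrank F ((LinearMap.ker (A - A').vecMulLinear).map A.vecMulLinear) :=
        Submodule.finrank_mono (inf_rowSpace_le_map_ker hA hAA')
    _ ≤ finrank F (LinearMap.ker (A - A').vecMulLinear) := Submodule.finrank_map_le _ _
    _ = Fintype.card ι - (A - A').rank := by omega

theorem eq_of_rowSpace_eq (hA : Injective (A.submatrix id e).vecMul)
    (hAA' : A.submatrix id e = A'.submatrix id e) (h : rowSpace A = rowSpace A') : A = A' := by
  refine ext_iff_vecMul.2 fun v => ?_
  obtain ⟨u, hu, huv⟩ := inf_rowSpace_le_map_ker hA hAA'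
    (show A.vecMulLinear v ∈ rowSpace A ⊓ rowSpace A' from ⟨⟨v, rfl⟩, h ▸ ⟨v, rfl⟩⟩)
  obtain rfl := injective_vecMul_of_submatrix hA huv
  simpa [vecMul_sub, sub_eq_zero] using hu

variable {e' : m' → n} {glue : Matrix ι m F → Matrix ι m' F → Matrix ι n F}

theorem finrank_inf_rowSpace_glue_le [Fintype n] [Fintype m] [Fintype m'] {t : ℕ}
    (hglue : ∀ G M, (glue G M).submatrix id e = G)
    (hglue' : ∀ G M, (glue G M).submatrix id e' = M)
    {G G' : Matrix ι m F} {M M' : Matrix ι m' F} (hG : Injective G.vecMul)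
    (hGG' : G ≠ G' → finrank F ↥(rowSpace G ⊓ rowSpace G') ≤ Fintype.card ι - t)
    (hMM' : M ≠ M' → t ≤ (M - M').rank) (hne : glue G M ≠ glue G' M') :
    finrank F ↥(rowSpace (glue G M) ⊓ rowSpace (glue G' M')) ≤ Fintype.card ι - t := by
  have hA : Injective ((glue G M).submatrix id e).vecMul := by rwa [hglue]
  by_cases hGG : G = G'
  · subst hGG
    have hMM : M ≠ M' := by rintro rfl; exact hne rfl
    have hrank : t ≤ (glue G M - glue G M').rank := by
      have hsub := rank_submatrix_le (glue G M - glue G M') id e'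
      simp only [submatrix_sub, Pi.sub_apply, hglue'] at hsub
      exact (hMM' hMM).trans hsub
    calc _ ≤ Fintype.card ι - (glue G M - glue G M').rank :=
          finrank_inf_rowSpace_le_of_submatrix_eq hA (by rw [hglue, hglue])
      _ ≤ Fintype.card ι - t := Nat.sub_le_sub_left hrank _
  · have hblock := finrank_inf_rowSpace_le_submatrix hA (glue G' M')
    rw [hglue, hglue] at hblock
    exact hblock.trans (hGG' hGG)

theorem isConstantDimensionCode_image_rowSpace_image2 [Fintype n] [Fintype m] [Fintype m']
    {d : ℕ} (hglue : ∀ G M, (glue G M).submatrix id e = G)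
    (hglue' : ∀ G M, (glue G M).submatrix id e' = M)
    {𝒢 : Set (Matrix ι m F)} {ℳ : Set (Matrix ι m' F)} (h𝒢inj : ∀ G ∈ 𝒢, Injective G.vecMul)
    (h𝒢 : ∀ G ∈ 𝒢, ∀ G' ∈ 𝒢, G ≠ G' →
      finrank F ↥(rowSpace G ⊓ rowSpace G') ≤ Fintype.card ι - d / 2)
    (hℳ : ∀ M ∈ ℳ, ∀ M' ∈ ℳ, M ≠ M' → d / 2 ≤ (M - M').rank) :
    IsConstantDimensionCode (rowSpace '' Set.image2 glue 𝒢 ℳ) (Fintype.card ι) d := by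
  constructor
  · rintro _ ⟨_, ⟨G, hG, M, -, rfl⟩, rfl⟩
    exact finrank_rowSpace_of_injective_submatrix (e := e) (by rw [hglue]; exact h𝒢inj G hG)
  · rintro _ ⟨_, ⟨G, hG, M, hM, rfl⟩, rfl⟩ _ ⟨_, ⟨G', hG', M', hM', rfl⟩, rfl⟩ hne
    exact finrank_inf_rowSpace_glue_le hglue hglue' (h𝒢inj G hG) (h𝒢 G hG G' hG')
      (hℳ M hM M' hM') fun h => hne (congrArg rowSpace h)

theorem ncard_image_rowSpace_image2 (hglue : ∀ G M, (glue G M).submatrix id e = G)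
    (hglue' : ∀ G M, (glue G M).submatrix id e' = M)
    {𝒢 : Set (Matrix ι m F)} (ℳ : Set (Matrix ι m' F)) (h𝒢inj : ∀ G ∈ 𝒢, Injective G.vecMul)
    (h𝒢 : ∀ G ∈ 𝒢, ∀ G' ∈ 𝒢, G ≠ G' → rowSpace G ≠ rowSpace G') :
    (rowSpace '' Set.image2 glue 𝒢 ℳ).ncard = 𝒢.ncard * ℳ.ncard := by
  have hglue_inj : Injective2 glue := fun G G' M M' h =>
    ⟨by simpa [hglue] using congrArg (·.submatrix id e) h,
      by simpa [hglue'] using congrArg (·.submatrix id e') h⟩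
  rw [Set.InjOn.ncard_image, ← Set.image_uncurry_prod,
    Set.ncard_image_of_injective _ hglue_inj.uncurry, Set.ncard_prod]
  rintro _ ⟨G, hG, M, -, rfl⟩ _ ⟨G', hG', M', -, rfl⟩ h
  have hA : Injective ((glue G M).submatrix id e).vecMul := by rw [hglue]; exact h𝒢inj G hG
  refine eq_of_rowSpace_eq hA ?_ h
  rw [hglue, hglue]
  refine not_imp_not.1 (h𝒢 G hG G' hG') ?_
  rw [← hglue G M, ← hglue G' M', ← map_funLeft_rowSpace, ← map_funLeft_rowSpace, h]

end

theorem linkage_construction_general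
    (F : Type*) [Field F] [Fintype F] (d n1 n2 k : ℕ)
    (hd : 0 < d) (hd2 : 2 ∣ d) (hk : 0 < k)
    (G1 : Set (Matrix (Fin k) (Fin n1) F)) (G2 : Set (Matrix (Fin k) (Fin n2) F))
    (M1 : Set (Matrix (Fin k) (Fin n1) F)) (M2 : Set (Matrix (Fin k) (Fin n2) F))
    (hG1rank : ∀ G ∈ G1, G.rank = k)
    (hG1 : ∀ G ∈ G1, ∀ G' ∈ G1, G ≠ G' →
      rowSpace G ≠ rowSpace G' ∧
        Module.finrank F ↥(rowSpace G ⊓ rowSpace G') ≤ k - d / 2)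
    (hG2rank : ∀ G ∈ G2, G.rank = k)
    (hG2 : ∀ G ∈ G2, ∀ G' ∈ G2, G ≠ G' →
      rowSpace G ≠ rowSpace G' ∧
        Module.finrank F ↥(rowSpace G ⊓ rowSpace G') ≤ k - d / 2)
    (hM2 : ∀ M ∈ M2, ∀ M' ∈ M2, M ≠ M' → d / 2 ≤ (M - M').rank)
    (hM1 : ∀ M ∈ M1, ∀ M' ∈ M1, M ≠ M' → d / 2 ≤ (M - M').rank)
    (hM1rank : ∀ M ∈ M1, M.rank ≤ k - d / 2) :
    let C : Set (Submodule F (Fin n1 ⊕ Fin n2 → F)) :=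
      {U | ∃ G ∈ G1, ∃ M ∈ M2, U = rowSpace (Matrix.fromCols G M)} ∪
        {U | ∃ M ∈ M1, ∃ G ∈ G2, U = rowSpace (Matrix.fromCols M G)}
    (∀ U ∈ C, Module.finrank F ↥U = k) ∧
    (∀ U ∈ C, ∀ V ∈ C, U ≠ V → Module.finrank F ↥(U ⊓ V) ≤ k - d / 2) ∧
    C.ncard = G1.ncard * M2.ncard + M1.ncard * G2.ncard := by
  intro C
  have hG1inj : ∀ G ∈ G1, Injective G.vecMul := fun G hG =>
    injective_vecMul_of_rank_eq (by simpa using hG1rank G hG)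
  have hG2inj : ∀ G ∈ G2, Injective G.vecMul := fun G hG =>
    injective_vecMul_of_rank_eq (by simpa using hG2rank G hG)
  set C1 := rowSpace '' Set.image2 fromCols G1 M2
  set C2 := rowSpace '' Set.image2 (fun G M => fromCols M G) G2 M1
  have hC : C = C1 ∪ C2 := by
    ext U
    simp only [C, C1, C2, Set.mem_union, Set.mem_ofPred_eq, Set.image_image2, Set.mem_image2]
    grind
  have hC1 : IsConstantDimensionCode C1 k d := by
    simpa using isConstantDimensionCode_image_rowSpace_image2 fromCols_submatrix_inl
      fromCols_submatrix_inr hG1inj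
      (by simpa using fun G hG G' hG' hne => (hG1 G hG G' hG' hne).2) hM2
  have hC2 : IsConstantDimensionCode C2 k d := by
    simpa using isConstantDimensionCode_image_rowSpace_image2
      (fun G M => fromCols_submatrix_inr M G) (fun G M => fromCols_submatrix_inl M G) hG2inj
      (by simpa using fun G hG G' hG' hne => (hG2 G hG G' hG' hne).2) hM1
  have hcross : ∀ U ∈ C1, ∀ V ∈ C2, finrank F ↥(U ⊓ V) ≤ k - d / 2 := by
    rintro _ ⟨_, ⟨G, hG, M, -, rfl⟩, rfl⟩ _ ⟨_, ⟨G', -, M', hM', rfl⟩, rfl⟩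
    exact (finrank_inf_rowSpace_le_rank_submatrix (e := Sum.inl) (hG1inj G hG) _).trans
      (hM1rank M' hM')
  rw [hC]
  refine ⟨(hC1.union hC2 hcross).1, (hC1.union hC2 hcross).2, ?_⟩
  rw [Set.ncard_union_eq (hC1.disjoint hcross hk (by omega)),
    ncard_image_rowSpace_image2 fromCols_submatrix_inl fromCols_submatrix_inr M2 hG1inj
      fun G hG G' hG' hne => (hG1 G hG G' hG' hne).1,
    ncard_image_rowSpace_image2 (fun G M => fromCols_submatrix_inr M G)
      (fun G M => fromCols_submatrix_inl M G) M1 hG2inj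
      fun G hG G' hG' hne => (hG2 G hG G' hG' hne).1,
    mul_comm G2.ncard]

/-- the CKMP linkage construction (Lemma 4.1 of Cossidente–Kurz–Marino–Pavese):
combining two constant dimension codes (given by full-rank generator matrices) with
rank metric codes, one of them rank-restricted, yields a constant dimension code. -/
theorem linkage_construction
    (F : Type*) [Field F] [Fintype F] (d n1 n2 k : ℕ)
    (hd : 0 < d) (hd2 : 2 ∣ d) (hk : 0 < k) (hn1 : k ≤ n1) (hn2 : k ≤ n2)
    (G1 : Set (Matrix (Fin k) (Fin n1) F)) (G2 : Set (Matrix (Fin k) (Fin n2) F))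
    (M1 : Set (Matrix (Fin k) (Fin n1) F)) (M2 : Set (Matrix (Fin k) (Fin n2) F))
    (hG1rank : ∀ G ∈ G1, G.rank = k)
    (hG1 : ∀ G ∈ G1, ∀ G' ∈ G1, G ≠ G' →
      rowSpace G ≠ rowSpace G' ∧
        Module.finrank F ↥(rowSpace G ⊓ rowSpace G') ≤ k - d / 2)
    (hG2rank : ∀ G ∈ G2, G.rank = k)
    (hG2 : ∀ G ∈ G2, ∀ G' ∈ G2, G ≠ G' →
      rowSpace G ≠ rowSpace G' ∧
        Module.finrank F ↥(rowSpace G ⊓ rowSpace G') ≤ k - d / 2)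
    (hM2 : ∀ M ∈ M2, ∀ M' ∈ M2, M ≠ M' → d / 2 ≤ (M - M').rank)
    (hM1 : ∀ M ∈ M1, ∀ M' ∈ M1, M ≠ M' → d / 2 ≤ (M - M').rank)
    (hM1rank : ∀ M ∈ M1, M.rank ≤ k - d / 2) :
    let C : Set (Submodule F (Fin n1 ⊕ Fin n2 → F)) :=
      {U | ∃ G ∈ G1, ∃ M ∈ M2, U = rowSpace (Matrix.fromCols G M)} ∪
        {U | ∃ M ∈ M1, ∃ G ∈ G2, U = rowSpace (Matrix.fromCols M G)}
    (∀ U ∈ C, Module.finrank F ↥U = k) ∧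
    (∀ U ∈ C, ∀ V ∈ C, U ≠ V → Module.finrank F ↥(U ⊓ V) ≤ k - d / 2) ∧
    C.ncard = G1.ncard * M2.ncard + M1.ncard * G2.ncard :=
  linkage_construction_general F d n1 n2 k hd hd2 hk G1 G2 M1 M2 hG1rank hG1 hG2rank hG2 hM2 hM1
    hM1rank
end

section
/- Let F be a finite field, let d be an even positive integer, let n = n1 + n2, and let S1 ⊆ F^n be the subspace of vectors whose first n1 coordinates are zero and S2 ⊆ F^n the subspace of vectors whose last n2 coordinates are zero. Let U be a k-dimensional subspace of F^n with dim(U ∩ S1) ≥ d/2 and dim(U ∩ S2) ≥ d/2, and let W be a k-dimensional subspace of F^n with W ∩ S1 = 0 or W ∩ S2 = 0. Then dim(U ∩ W) ≤ k − d/2; equivalently, the subspace distance satisfies dis(U, W) = 2k − 2·dim(U ∩ W) ≥ d. -/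
open Matrix

/-- `S1`: the subspace of `F^(n1+n2)` of vectors whose first `n1` coordinates are zero. -/
noncomputable def firstZero (F : Type*) [Field F] (n1 n2 : ℕ) :
    Submodule F (Fin n1 ⊕ Fin n2 → F) :=
  LinearMap.ker (LinearMap.funLeft F F (Sum.inl : Fin n1 → Fin n1 ⊕ Fin n2))

/-- `S2`: the subspace of `F^(n1+n2)` of vectors whose last `n2` coordinates are zero. -/
noncomputable def lastZero (F : Type*) [Field F] (n1 n2 : ℕ) :
    Submodule F (Fin n1 ⊕ Fin n2 → F) :=
  LinearMap.ker (LinearMap.funLeft F F (Sum.inr : Fin n2 → Fin n1 ⊕ Fin n2))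

open Module

theorem Submodule.finrank_inf_add_finrank_inf_le_of_disjoint {K V : Type*} [DivisionRing K]
    [AddCommGroup V] [Module K V] [FiniteDimensional K V] (U : Submodule K V)
    {S T : Submodule K V} (hST : Disjoint S T) :
    finrank K ↥(U ⊓ S) + finrank K ↥(U ⊓ T) ≤ finrank K U := by
  have hdisj : (U ⊓ S) ⊓ (U ⊓ T) = ⊥ := (hST.mono inf_le_right inf_le_right).eq_bot
  calc finrank K ↥(U ⊓ S) + finrank K ↥(U ⊓ T) = finrank K ↥((U ⊓ S) ⊔ (U ⊓ T)) := by
        rw [← Submodule.finrank_sup_add_finrank_inf_eq, hdisj, finrank_bot, add_zero]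
    _ ≤ finrank K U := Submodule.finrank_mono (sup_le inf_le_left inf_le_left)

theorem inserting_sufficient_condition_general
    (F : Type*) [Field F] (d n1 n2 k : ℕ)
    (hd2 : 2 ∣ d)
    (U W : Submodule F (Fin n1 ⊕ Fin n2 → F))
    (hU : Module.finrank F ↥U = k)
    (hUS1 : d / 2 ≤ Module.finrank F ↥(U ⊓ firstZero F n1 n2))
    (hUS2 : d / 2 ≤ Module.finrank F ↥(U ⊓ lastZero F n1 n2))
    (hWS : W ⊓ firstZero F n1 n2 = ⊥ ∨ W ⊓ lastZero F n1 n2 = ⊥) :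
    Module.finrank F ↥(U ⊓ W) ≤ k - d / 2 ∧
      d ≤ 2 * k - 2 * Module.finrank F ↥(U ⊓ W) := by
  obtain ⟨m, rfl⟩ := hd2
  rw [Nat.mul_div_cancel_left m two_pos] at hUS1 hUS2 ⊢
  have hUW : finrank F ↥(U ⊓ W) + m ≤ k := by
    rcases hWS with h | h <;>
      linarith [U.finrank_inf_add_finrank_inf_le_of_disjoint (disjoint_iff.mpr h)]
  omega

/-- a sufficient condition for inserting a subspace: if `U` meets `S1` and
`S2` each in dimension at least `d/2`, and `W` meets `S1` or `S2` trivially, then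
`dim(U ∩ W) ≤ k - d/2`, i.e. `dis(U,W) ≥ d`. -/
theorem inserting_sufficient_condition
    (F : Type*) [Field F] [Fintype F] (d n1 n2 k : ℕ)
    (hd : 0 < d) (hd2 : 2 ∣ d)
    (U W : Submodule F (Fin n1 ⊕ Fin n2 → F))
    (hU : Module.finrank F ↥U = k) (hW : Module.finrank F ↥W = k)
    (hUS1 : d / 2 ≤ Module.finrank F ↥(U ⊓ firstZero F n1 n2))
    (hUS2 : d / 2 ≤ Module.finrank F ↥(U ⊓ lastZero F n1 n2))
    (hWS : W ⊓ firstZero F n1 n2 = ⊥ ∨ W ⊓ lastZero F n1 n2 = ⊥) :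
    Module.finrank F ↥(U ⊓ W) ≤ k - d / 2 ∧
      d ≤ 2 * k - 2 * Module.finrank F ↥(U ⊓ W) :=
  inserting_sufficient_condition_general F d n1 n2 k hd2 U W hU hUS1 hUS2 hWS
end

section
/- Let F be a finite field, let d be an even positive integer, and let n1, n2, a1, a2, g1, g2, k, s be positive integers with a1 + a2 = k, g1 + g2 = k − d/2, and for i = 1,2: g_i < a_i ≤ n_i and a_i ≥ d/2. For i = 1,2 and j = 1,…,s let D_i^j be a set of a_i-dimensional subspaces of F^{n_i} such that dim(U ∩ U') ≤ a_i − d/2 for all distinct U, U' ∈ D_i^j, and such that dim(U ∩ U') ≤ g_i for all U ∈ D_i^j and U' ∈ D_i^{j'} whenever j ≠ j'. For j = 1,…,s set D_j = { U1 × U2 : U1 ∈ D_1^j, U2 ∈ D_2^j }, where U1 × U2 denotes the product subspace of F^{n1} × F^{n2}. Then every element of D = ∪_{j=1}^s D_j is a k-dimensional subspace of F^{n1} × F^{n2}, and dim(V ∩ V') ≤ k − d/2 for all distinct V, V' ∈ D; that is, D is a constant dimension code with subspace distance at least d. -/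
/-!
A product `U₁ × U₂` has dimension `a₁ + a₂ = k`, and
`(U₁ × U₂) ⊓ (U₁' × U₂') = (U₁ ⊓ U₁') × (U₂ ⊓ U₂')`, so the intersection of two codewords has
dimension the sum of the dimensions of the two factor intersections. Within one block `j` the two
codewords differ in some factor, which contributes at most `aᵢ - d/2` while the other factor
contributes at most its dimension; across blocks the factors contribute at most
`g₁ + g₂ = k - d/2`.
-/

namespace Submodule

variable {K M N : Type*} [DivisionRing K] [AddCommGroup M] [Module K M]
  [AddCommGroup N] [Module K N]

def prodEquiv (p : Submodule K M) (q : Submodule K N) : ↥(p.prod q) ≃ₗ[K] ↥p × ↥q where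
  toFun x := (⟨x.1.1, x.2.1⟩, ⟨x.1.2, x.2.2⟩)
  invFun y := ⟨(y.1.1, y.2.1), ⟨y.1.2, y.2.2⟩⟩
  left_inv _ := rfl
  right_inv _ := rfl
  map_add' _ _ := rfl
  map_smul' _ _ := rfl

theorem finrank_prod (p : Submodule K M) (q : Submodule K N)
    [FiniteDimensional K p] [FiniteDimensional K q] :
    Module.finrank K (p.prod q) = Module.finrank K p + Module.finrank K q := by
  rw [(prodEquiv p q).finrank_eq, Module.finrank_prod]

theorem finrank_prod_inf_prod_le [FiniteDimensional K M] [FiniteDimensional K N]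
    {p p' : Submodule K M} {q q' : Submodule K N} {b c : ℕ}
    (hp : Module.finrank K ↥(p ⊓ p') ≤ b) (hq : Module.finrank K ↥(q ⊓ q') ≤ c) :
    Module.finrank K ↥(p.prod q ⊓ p'.prod q') ≤ b + c := by
  rw [prod_inf_prod, finrank_prod]
  exact Nat.add_le_add hp hq

theorem finrank_inf_le_of_finrank_eq [FiniteDimensional K M] (p : Submodule K M)
    {p' : Submodule K M} {a : ℕ} (hp' : Module.finrank K p' = a) :
    Module.finrank K ↥(p ⊓ p') ≤ a :=
  hp' ▸ finrank_mono inf_le_right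

end Submodule

theorem ckmp_product_construction_general
    (F : Type*) [Field F] (d n1 n2 a1 a2 g1 g2 k s : ℕ)
    (hk : a1 + a2 = k) (hg : g1 + g2 = k - d / 2)
    (ha1d : d / 2 ≤ a1) (ha2d : d / 2 ≤ a2)
    (D1 : Fin s → Set (Submodule F (Fin n1 → F)))
    (D2 : Fin s → Set (Submodule F (Fin n2 → F)))
    (hdim1 : ∀ j, ∀ U ∈ D1 j, Module.finrank F ↥U = a1)
    (hdim2 : ∀ j, ∀ U ∈ D2 j, Module.finrank F ↥U = a2)
    (hin1 : ∀ j, ∀ U ∈ D1 j, ∀ U' ∈ D1 j, U ≠ U' →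
      Module.finrank F ↥(U ⊓ U') ≤ a1 - d / 2)
    (hin2 : ∀ j, ∀ U ∈ D2 j, ∀ U' ∈ D2 j, U ≠ U' →
      Module.finrank F ↥(U ⊓ U') ≤ a2 - d / 2)
    (hcross1 : ∀ j j', j ≠ j' → ∀ U ∈ D1 j, ∀ U' ∈ D1 j',
      Module.finrank F ↥(U ⊓ U') ≤ g1)
    (hcross2 : ∀ j j', j ≠ j' → ∀ U ∈ D2 j, ∀ U' ∈ D2 j',
      Module.finrank F ↥(U ⊓ U') ≤ g2) :
    let D : Set (Submodule F ((Fin n1 → F) × (Fin n2 → F))) :=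
      ⋃ j, {V | ∃ U1 ∈ D1 j, ∃ U2 ∈ D2 j, V = Submodule.prod U1 U2}
    (∀ V ∈ D, Module.finrank F ↥V = k) ∧
    (∀ V ∈ D, ∀ V' ∈ D, V ≠ V' → Module.finrank F ↥(V ⊓ V') ≤ k - d / 2) := by
  intro D
  have mem_D : ∀ V ∈ D, ∃ j, ∃ U1 ∈ D1 j, ∃ U2 ∈ D2 j, V = U1.prod U2 := by
    simp [D]
  refine ⟨fun V hV ↦ ?_, fun V hV V' hV' hne ↦ ?_⟩
  · obtain ⟨j, U1, h1, U2, h2, rfl⟩ := mem_D V hV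
    rw [Submodule.finrank_prod, hdim1 j U1 h1, hdim2 j U2 h2, hk]
  obtain ⟨j, U1, h1, U2, h2, rfl⟩ := mem_D V hV
  obtain ⟨j', U1', h1', U2', h2', rfl⟩ := mem_D V' hV'
  by_cases hj : j = j'
  · subst hj
    by_cases hU1 : U1 = U1'
    · subst hU1
      have hU2 : U2 ≠ U2' := fun h ↦ hne (h ▸ rfl)
      have := Submodule.finrank_prod_inf_prod_le
        (Submodule.finrank_inf_le_of_finrank_eq U1 (hdim1 j U1 h1)) (hin2 j U2 h2 U2' h2' hU2)
      omega
    · have := Submodule.finrank_prod_inf_prod_le (hin1 j U1 h1 U1' h1' hU1)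
        (Submodule.finrank_inf_le_of_finrank_eq U2 (hdim2 j U2' h2'))
      omega
  · exact hg ▸ Submodule.finrank_prod_inf_prod_le (hcross1 j j' hj U1 h1 U1' h1')
      (hcross2 j j' hj U2 h2 U2' h2')

/-- the CKMP combining construction (Lemma 4.4 of
Cossidente–Kurz–Marino–Pavese, case `l = 2`): products of subspaces from families of
CDCs with controlled pairwise intersections form a constant dimension code with
subspace distance at least `d`. -/
theorem ckmp_product_construction
    (F : Type*) [Field F] [Fintype F] (d n1 n2 a1 a2 g1 g2 k s : ℕ)
    (hd : 0 < d) (hd2 : 2 ∣ d) (hs : 0 < s)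
    (hn1 : 0 < n1) (hn2 : 0 < n2) (hg1 : 0 < g1) (hg2 : 0 < g2)
    (hk : a1 + a2 = k) (hg : g1 + g2 = k - d / 2)
    (hga1 : g1 < a1) (hga2 : g2 < a2) (ha1n : a1 ≤ n1) (ha2n : a2 ≤ n2)
    (ha1d : d / 2 ≤ a1) (ha2d : d / 2 ≤ a2)
    (D1 : Fin s → Set (Submodule F (Fin n1 → F)))
    (D2 : Fin s → Set (Submodule F (Fin n2 → F)))
    (hdim1 : ∀ j, ∀ U ∈ D1 j, Module.finrank F ↥U = a1)
    (hdim2 : ∀ j, ∀ U ∈ D2 j, Module.finrank F ↥U = a2)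
    (hin1 : ∀ j, ∀ U ∈ D1 j, ∀ U' ∈ D1 j, U ≠ U' →
      Module.finrank F ↥(U ⊓ U') ≤ a1 - d / 2)
    (hin2 : ∀ j, ∀ U ∈ D2 j, ∀ U' ∈ D2 j, U ≠ U' →
      Module.finrank F ↥(U ⊓ U') ≤ a2 - d / 2)
    (hcross1 : ∀ j j', j ≠ j' → ∀ U ∈ D1 j, ∀ U' ∈ D1 j',
      Module.finrank F ↥(U ⊓ U') ≤ g1)
    (hcross2 : ∀ j j', j ≠ j' → ∀ U ∈ D2 j, ∀ U' ∈ D2 j',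
      Module.finrank F ↥(U ⊓ U') ≤ g2) :
    let D : Set (Submodule F ((Fin n1 → F) × (Fin n2 → F))) :=
      ⋃ j, {V | ∃ U1 ∈ D1 j, ∃ U2 ∈ D2 j, V = Submodule.prod U1 U2}
    (∀ V ∈ D, Module.finrank F ↥V = k) ∧
    (∀ V ∈ D, ∀ V' ∈ D, V ≠ V' → Module.finrank F ↥(V ⊓ V') ≤ k - d / 2) :=
  ckmp_product_construction_general F d n1 n2 a1 a2 g1 g2 k s hk hg ha1d ha2d D1 D2 hdim1 hdim2 hin1
    hin2 hcross1 hcross2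
end

section
/- Let F be a finite field, let d be an even positive integer, and let n = n1 + n2, k = a1 + a2 with a_i ≥ d/2 and a_i ≤ t_i ≤ n_i for i = 1,2. Let W ⊆ F^n be the row space of a k × n block matrix with row blocks of sizes a1, a2 and column blocks of sizes t1, n1−t1, t2, n2−t2 given by ( G_1, M_{1,1}, 0, M_{1,2} ; 0, M_{2,1}, G_2, M_{2,2} ), where G_1 is an a1 × t1 matrix of rank a1, G_2 is an a2 × t2 matrix of rank a2, rank(M_{1,2}) ≤ a1 − d/2 and rank(M_{2,1}) ≤ a2 − d/2. Let S1 ⊆ F^n be the subspace of vectors whose first n1 coordinates are zero and S2 the subspace of vectors whose last n2 coordinates are zero. Then dim(W ∩ S1) = a2 − rank(M_{2,1}) ≥ d/2 and dim(W ∩ S2) = a1 − rank(M_{1,2}) ≥ d/2. Consequently, if C is any set of k-dimensional subspaces of F^n with pairwise subspace distance ≥ d such that every W' ∈ C satisfies W' ∩ S1 = 0 or W' ∩ S2 = 0, then dis(W, W') ≥ d for every W' ∈ C. -/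
/-! Since `G1` and `G2` have full row rank, the rows of the generator matrix are independent, and
a combination `(u, v)` of them vanishes on the first `n1` coordinates iff `u G1 = 0` and
`u M11 + v M21 = 0`, i.e. iff `u = 0` and `v M21 = 0`. Hence `W ∩ S1` is isomorphic to the left
kernel of `M21`, of dimension `a2 - rank M21 ≥ d/2`; symmetrically for `S2`. If `W' ∩ S1 = 0`,
then `W ∩ W'` and `W ∩ S1` are independent subspaces of the `k`-dimensional space `W`, so
`dim (W ∩ W') ≤ k - d/2`, which for even `d` is `dis(W, W') ≥ d`. -/

open Matrix

/-- The generator matrix `( G1, M11, 0, M12 ; 0, M21, G2, M22 )` with row blocks of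
sizes `a1, a2` and column blocks of sizes `t1, p1, t2, p2`. -/
def gen7 {F : Type*} [Field F] {a1 a2 t1 t2 p1 p2 : ℕ}
    (G1 : Matrix (Fin a1) (Fin t1) F) (M11 : Matrix (Fin a1) (Fin p1) F)
    (M12 : Matrix (Fin a1) (Fin p2) F) (M21 : Matrix (Fin a2) (Fin p1) F)
    (G2 : Matrix (Fin a2) (Fin t2) F) (M22 : Matrix (Fin a2) (Fin p2) F) :
    Matrix (Fin a1 ⊕ Fin a2) ((Fin t1 ⊕ Fin p1) ⊕ (Fin t2 ⊕ Fin p2)) F :=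
  Matrix.fromBlocks (Matrix.fromCols G1 M11) (Matrix.fromCols 0 M12)
    (Matrix.fromCols 0 M21) (Matrix.fromCols G2 M22)

/-- `S1`: the subspace of vectors whose first `n1 = t1 + p1` coordinates are zero. -/
noncomputable def S1 (F : Type*) [Field F] (t1 p1 t2 p2 : ℕ) :
    Submodule F ((Fin t1 ⊕ Fin p1) ⊕ (Fin t2 ⊕ Fin p2) → F) :=
  LinearMap.ker (LinearMap.funLeft F F
    (Sum.inl : Fin t1 ⊕ Fin p1 → (Fin t1 ⊕ Fin p1) ⊕ (Fin t2 ⊕ Fin p2)))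

/-- `S2`: the subspace of vectors whose last `n2 = t2 + p2` coordinates are zero. -/
noncomputable def S2 (F : Type*) [Field F] (t1 p1 t2 p2 : ℕ) :
    Submodule F ((Fin t1 ⊕ Fin p1) ⊕ (Fin t2 ⊕ Fin p2) → F) :=
  LinearMap.ker (LinearMap.funLeft F F
    (Sum.inr : Fin t2 ⊕ Fin p2 → (Fin t1 ⊕ Fin p1) ⊕ (Fin t2 ⊕ Fin p2)))

open Module

theorem Sum.elim_eq_zero_iff {α β M : Type*} [Zero M] {u : α → M} {v : β → M} :
    Sum.elim u v = 0 ↔ u = 0 ∧ v = 0 := by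
  rw [← Sum.elim_zero_zero, Sum.elim_eq_iff]

namespace Matrix

variable {F : Type*} [Field F] {m n : Type*} [Fintype m] [Fintype n]

theorem finrank_ker_vecMulLinear_add_rank (A : Matrix m n F) :
    finrank F (LinearMap.ker A.vecMulLinear) + A.rank = Fintype.card m := by
  rw [← rank_transpose, rank, mulVecLin_transpose, add_comm,
    LinearMap.finrank_range_add_finrank_ker, finrank_fintype_fun_eq_card]

theorem vecMul_injective_of_rank_eq_card {A : Matrix m n F} (h : A.rank = Fintype.card m) :
    Function.Injective (· ᵥ* A) := by
  rw [vecMul_injective_iff, linearIndependent_iff_card_eq_finrank_span, ← h,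
    rank_eq_finrank_span_row]
  rfl

theorem vecMul_eq_zero_and_add_eq_zero_iff {a b t p : Type*} [Fintype a] [Fintype b]
    {G : Matrix a t F} (hG : Function.Injective (· ᵥ* G)) (B : Matrix a p F)
    (C : Matrix b p F) (u : a → F) (v : b → F) :
    u ᵥ* G = 0 ∧ u ᵥ* B + v ᵥ* C = 0 ↔ u = 0 ∧ v ᵥ* C = 0 := by
  constructor
  · rintro ⟨hu, huv⟩
    obtain rfl : u = 0 := hG (by simpa using hu)
    simpa using huv
  · rintro ⟨rfl, hv⟩
    simp [hv]

end Matrix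

namespace Submodule

variable {K U V W : Type*} [Field K] [AddCommGroup U] [Module K U] [AddCommGroup V] [Module K V]
  [AddCommGroup W] [Module K W]

theorem finrank_range_inf_of_comap_eq_map {f : V →ₗ[K] W} {ι : U →ₗ[K] V} {S : Submodule K W}
    {P : Submodule K U} (hf : Function.Injective f) (hι : Function.Injective ι)
    (h : S.comap f = P.map ι) :
    finrank K ↥(LinearMap.range f ⊓ S) = finrank K P := by
  rw [← map_comap_eq, h, ← map_comp]
  exact (equivMapOfInjective (f ∘ₗ ι) (hf.comp hι) P).finrank_eq.symm

theorem finrank_inf_add_finrank_inf_le_of_disjoint_s8 [FiniteDimensional K V] (L : Submodule K V)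
    {P Q : Submodule K V} (h : Disjoint P Q) :
    finrank K ↥(L ⊓ P) + finrank K ↥(L ⊓ Q) ≤ finrank K L := by
  rw [← finrank_sup_add_finrank_inf_eq,
    (h.mono inf_le_right inf_le_right).eq_bot, finrank_bot, add_zero]
  exact finrank_mono (sup_le inf_le_left inf_le_left)

end Submodule

section MultiBlocks

variable {F : Type*} [Field F] {a1 a2 t1 t2 p1 p2 : ℕ}
  (G1 : Matrix (Fin a1) (Fin t1) F) (M11 : Matrix (Fin a1) (Fin p1) F)
  (M12 : Matrix (Fin a1) (Fin p2) F) (M21 : Matrix (Fin a2) (Fin p1) F)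
  (G2 : Matrix (Fin a2) (Fin t2) F) (M22 : Matrix (Fin a2) (Fin p2) F)

theorem sum_elim_vecMul_gen7 (u : Fin a1 → F) (v : Fin a2 → F) :
    Sum.elim u v ᵥ* gen7 G1 M11 M12 M21 G2 M22 =
      Sum.elim (Sum.elim (u ᵥ* G1) (u ᵥ* M11 + v ᵥ* M21))
        (Sum.elim (v ᵥ* G2) (u ᵥ* M12 + v ᵥ* M22)) := by
  simp only [gen7, vecMul_fromBlocks, Sum.elim_comp_inl, Sum.elim_comp_inr, vecMul_fromCols,
    vecMul_zero, ← Sum.elim_add_add, zero_add, add_zero]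

variable {G1 G2}

theorem vecMulLinear_gen7_injective (hG1 : Function.Injective (· ᵥ* G1))
    (hG2 : Function.Injective (· ᵥ* G2)) :
    Function.Injective (gen7 G1 M11 M12 M21 G2 M22).vecMulLinear := by
  refine (injective_iff_map_eq_zero _).2 fun x hx => ?_
  obtain ⟨u, v, rfl⟩ : ∃ u v, x = Sum.elim u v := ⟨_, _, (Sum.elim_comp_inl_inr x).symm⟩
  simp only [vecMulLinear_apply, sum_elim_vecMul_gen7, Sum.elim_eq_zero_iff] at hx
  rw [Sum.elim_eq_zero_iff, ← hG1.eq_iff' (zero_vecMul G1), ← hG2.eq_iff' (zero_vecMul G2)]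
  exact ⟨hx.1.1, hx.2.1⟩

theorem sum_elim_vecMul_gen7_mem_S1_iff (hG1 : Function.Injective (· ᵥ* G1))
    (u : Fin a1 → F) (v : Fin a2 → F) :
    Sum.elim u v ᵥ* gen7 G1 M11 M12 M21 G2 M22 ∈ S1 F t1 p1 t2 p2 ↔ u = 0 ∧ v ᵥ* M21 = 0 := by
  change (Sum.elim u v ᵥ* gen7 G1 M11 M12 M21 G2 M22) ∘ Sum.inl = 0 ↔ _
  rw [sum_elim_vecMul_gen7, Sum.elim_comp_inl, Sum.elim_eq_zero_iff,
    vecMul_eq_zero_and_add_eq_zero_iff hG1]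

theorem sum_elim_vecMul_gen7_mem_S2_iff (hG2 : Function.Injective (· ᵥ* G2))
    (u : Fin a1 → F) (v : Fin a2 → F) :
    Sum.elim u v ᵥ* gen7 G1 M11 M12 M21 G2 M22 ∈ S2 F t1 p1 t2 p2 ↔ v = 0 ∧ u ᵥ* M12 = 0 := by
  change (Sum.elim u v ᵥ* gen7 G1 M11 M12 M21 G2 M22) ∘ Sum.inr = 0 ↔ _
  rw [sum_elim_vecMul_gen7, Sum.elim_comp_inr, Sum.elim_eq_zero_iff, add_comm,
    vecMul_eq_zero_and_add_eq_zero_iff hG2]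

theorem comap_vecMulLinear_gen7_S1 (hG1 : Function.Injective (· ᵥ* G1)) :
    (S1 F t1 p1 t2 p2).comap (gen7 G1 M11 M12 M21 G2 M22).vecMulLinear =
      (LinearMap.ker M21.vecMulLinear).map
        ((LinearEquiv.sumArrowLequivProdArrow _ _ F F).symm.toLinearMap ∘ₗ
          LinearMap.inr F _ _) := by
  ext x
  obtain ⟨u, v, rfl⟩ : ∃ u v, x = Sum.elim u v := ⟨_, _, (Sum.elim_comp_inl_inr x).symm⟩
  rw [Submodule.mem_comap, vecMulLinear_apply, sum_elim_vecMul_gen7_mem_S1_iff _ _ _ _ hG1]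
  constructor
  · rintro ⟨rfl, hv⟩
    exact ⟨v, hv, rfl⟩
  · rintro ⟨w, hw, hwx⟩
    obtain ⟨rfl, rfl⟩ := Sum.elim_eq_iff.1 hwx
    exact ⟨rfl, hw⟩

theorem comap_vecMulLinear_gen7_S2 (hG2 : Function.Injective (· ᵥ* G2)) :
    (S2 F t1 p1 t2 p2).comap (gen7 G1 M11 M12 M21 G2 M22).vecMulLinear =
      (LinearMap.ker M12.vecMulLinear).map
        ((LinearEquiv.sumArrowLequivProdArrow _ _ F F).symm.toLinearMap ∘ₗ
          LinearMap.inl F _ _) := by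
  ext x
  obtain ⟨u, v, rfl⟩ : ∃ u v, x = Sum.elim u v := ⟨_, _, (Sum.elim_comp_inl_inr x).symm⟩
  rw [Submodule.mem_comap, vecMulLinear_apply, sum_elim_vecMul_gen7_mem_S2_iff _ _ _ _ hG2]
  constructor
  · rintro ⟨rfl, hu⟩
    exact ⟨u, hu, rfl⟩
  · rintro ⟨w, hw, hwx⟩
    obtain ⟨rfl, rfl⟩ := Sum.elim_eq_iff.1 hwx
    exact ⟨rfl, hw⟩

theorem finrank_rowSpace_gen7_inf_S1 (hG1 : Function.Injective (· ᵥ* G1))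
    (hG2 : Function.Injective (· ᵥ* G2)) :
    finrank F ↥(rowSpace (gen7 G1 M11 M12 M21 G2 M22) ⊓ S1 F t1 p1 t2 p2) =
      finrank F (LinearMap.ker M21.vecMulLinear) := by
  refine Submodule.finrank_range_inf_of_comap_eq_map
    (vecMulLinear_gen7_injective M11 M12 M21 M22 hG1 hG2) ?_
    (comap_vecMulLinear_gen7_S1 _ _ _ _ hG1)
  rw [LinearMap.coe_comp]
  exact (LinearEquiv.injective _).comp LinearMap.inr_injective

theorem finrank_rowSpace_gen7_inf_S2 (hG1 : Function.Injective (· ᵥ* G1))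
    (hG2 : Function.Injective (· ᵥ* G2)) :
    finrank F ↥(rowSpace (gen7 G1 M11 M12 M21 G2 M22) ⊓ S2 F t1 p1 t2 p2) =
      finrank F (LinearMap.ker M12.vecMulLinear) := by
  refine Submodule.finrank_range_inf_of_comap_eq_map
    (vecMulLinear_gen7_injective M11 M12 M21 M22 hG1 hG2) ?_
    (comap_vecMulLinear_gen7_S2 _ _ _ _ hG2)
  rw [LinearMap.coe_comp]
  exact (LinearEquiv.injective _).comp LinearMap.inl_injective

end MultiBlocks

theorem multi_blocks_codeword_inserting_general
    (F : Type*) [Field F] (d a1 a2 t1 t2 p1 p2 k : ℕ)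
    (hd2 : 2 ∣ d)
    (hk : a1 + a2 = k)
    (ha1 : d / 2 ≤ a1) (ha2 : d / 2 ≤ a2)
    (G1 : Matrix (Fin a1) (Fin t1) F) (M11 : Matrix (Fin a1) (Fin p1) F)
    (M12 : Matrix (Fin a1) (Fin p2) F) (M21 : Matrix (Fin a2) (Fin p1) F)
    (G2 : Matrix (Fin a2) (Fin t2) F) (M22 : Matrix (Fin a2) (Fin p2) F)
    (hG1 : G1.rank = a1) (hG2 : G2.rank = a2)
    (hM12 : M12.rank ≤ a1 - d / 2) (hM21 : M21.rank ≤ a2 - d / 2) :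
    let W := rowSpace (gen7 G1 M11 M12 M21 G2 M22)
    (Module.finrank F ↥(W ⊓ S1 F t1 p1 t2 p2) = a2 - M21.rank) ∧
    (d / 2 ≤ Module.finrank F ↥(W ⊓ S1 F t1 p1 t2 p2)) ∧
    (Module.finrank F ↥(W ⊓ S2 F t1 p1 t2 p2) = a1 - M12.rank) ∧
    (d / 2 ≤ Module.finrank F ↥(W ⊓ S2 F t1 p1 t2 p2)) ∧
    (∀ C : Set (Submodule F ((Fin t1 ⊕ Fin p1) ⊕ (Fin t2 ⊕ Fin p2) → F)),
      (∀ W' ∈ C, Module.finrank F ↥W' = k) →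
      (∀ W' ∈ C, ∀ W'' ∈ C, W' ≠ W'' →
        d ≤ 2 * k - 2 * Module.finrank F ↥(W' ⊓ W'')) →
      (∀ W' ∈ C, W' ⊓ S1 F t1 p1 t2 p2 = ⊥ ∨ W' ⊓ S2 F t1 p1 t2 p2 = ⊥) →
      ∀ W' ∈ C, d ≤ 2 * k - 2 * Module.finrank F ↥(W ⊓ W')) := by
  intro W
  have hG1inj : Function.Injective (· ᵥ* G1) :=
    vecMul_injective_of_rank_eq_card (by simpa using hG1)
  have hG2inj : Function.Injective (· ᵥ* G2) :=
    vecMul_injective_of_rank_eq_card (by simpa using hG2)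
  have hWS1 : finrank F ↥(W ⊓ S1 F t1 p1 t2 p2) + M21.rank = a2 := by
    simpa [W, finrank_rowSpace_gen7_inf_S1 M11 M12 M21 M22 hG1inj hG2inj]
      using finrank_ker_vecMulLinear_add_rank M21
  have hWS2 : finrank F ↥(W ⊓ S2 F t1 p1 t2 p2) + M12.rank = a1 := by
    simpa [W, finrank_rowSpace_gen7_inf_S2 M11 M12 M21 M22 hG1inj hG2inj]
      using finrank_ker_vecMulLinear_add_rank M12
  have hW : finrank F W = k :=
    (LinearMap.finrank_range_of_inj
      (vecMulLinear_gen7_injective M11 M12 M21 M22 hG1inj hG2inj)).trans (by simp [← hk])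
  refine ⟨by omega, by omega, by omega, by omega, fun C _ _ hC W' hW' => ?_⟩
  obtain h | h := hC W' hW' <;>
    have := W.finrank_inf_add_finrank_inf_le_of_disjoint_s8 (disjoint_iff.2 h) <;>
    omega

/-- a codeword of the multi-blocks construction with rank-restricted
off-diagonal blocks meets `S1` in dimension `a2 - rank M21 ≥ d/2` and `S2` in dimension
`a1 - rank M12 ≥ d/2`; consequently it is at subspace distance at least `d` from every
member of a CDC of minimum distance `d` all of whose members meet `S1` or `S2`
trivially. -/
theorem multi_blocks_codeword_inserting
    (F : Type*) [Field F] [Fintype F] (d n1 n2 a1 a2 t1 t2 p1 p2 k : ℕ)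
    (hd : 0 < d) (hd2 : 2 ∣ d)
    (hn1 : n1 = t1 + p1) (hn2 : n2 = t2 + p2) (hk : a1 + a2 = k)
    (ha1 : d / 2 ≤ a1) (ha2 : d / 2 ≤ a2)
    (ht1 : a1 ≤ t1) (ht2 : a2 ≤ t2)
    (G1 : Matrix (Fin a1) (Fin t1) F) (M11 : Matrix (Fin a1) (Fin p1) F)
    (M12 : Matrix (Fin a1) (Fin p2) F) (M21 : Matrix (Fin a2) (Fin p1) F)
    (G2 : Matrix (Fin a2) (Fin t2) F) (M22 : Matrix (Fin a2) (Fin p2) F)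
    (hG1 : G1.rank = a1) (hG2 : G2.rank = a2)
    (hM12 : M12.rank ≤ a1 - d / 2) (hM21 : M21.rank ≤ a2 - d / 2) :
    let W := rowSpace (gen7 G1 M11 M12 M21 G2 M22)
    (Module.finrank F ↥(W ⊓ S1 F t1 p1 t2 p2) = a2 - M21.rank) ∧
    (d / 2 ≤ Module.finrank F ↥(W ⊓ S1 F t1 p1 t2 p2)) ∧
    (Module.finrank F ↥(W ⊓ S2 F t1 p1 t2 p2) = a1 - M12.rank) ∧
    (d / 2 ≤ Module.finrank F ↥(W ⊓ S2 F t1 p1 t2 p2)) ∧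
    (∀ C : Set (Submodule F ((Fin t1 ⊕ Fin p1) ⊕ (Fin t2 ⊕ Fin p2) → F)),
      (∀ W' ∈ C, Module.finrank F ↥W' = k) →
      (∀ W' ∈ C, ∀ W'' ∈ C, W' ≠ W'' →
        d ≤ 2 * k - 2 * Module.finrank F ↥(W' ⊓ W'')) →
      (∀ W' ∈ C, W' ⊓ S1 F t1 p1 t2 p2 = ⊥ ∨ W' ⊓ S2 F t1 p1 t2 p2 = ⊥) →
      ∀ W' ∈ C, d ≤ 2 * k - 2 * Module.finrank F ↥(W ⊓ W')) :=
  multi_blocks_codeword_inserting_general F d a1 a2 t1 t2 p1 p2 k hd2 hk ha1 ha2 G1 M11 M12 M21 G2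
    M22 hG1 hG2 hM12 hM21
end

section
/- Let F be a finite field and u1, u2, p, m, b1, b2, d_f, s positive integers with b1 + b2 ≥ d_f. For r = 1,…,s let M_1^r be u1 × p matrices and M_2^r be u2 × m matrices over F such that for all r ≠ r': M_1^r ≠ M_1^{r'}, M_2^r ≠ M_2^{r'}, rank(M_1^r − M_1^{r'}) ≥ b1 and rank(M_2^r − M_2^{r'}) ≥ b2. Let M_3 be a set of u1 × m matrices with rank(A − B) ≥ d_f for all distinct A, B ∈ M_3. Then the set M of (u1+u2) × (p+m) block matrices ( M_1^r, M_3 ; 0, M_2^r ), for 1 ≤ r ≤ s and M_3 ∈ M_3, has cardinality s·|M_3| and minimum rank distance ≥ d_f, i.e. rank(X − Y) ≥ d_f for all distinct X, Y ∈ M. -/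
/-!
Two codewords with the same index `r` differ only in the upper right block, so their distance is
at least the rank of the difference of the `M₃` parts, hence at least `d_f`. Codewords with
different indices differ by a block upper triangular matrix, whose rank is at least
`rank (ΔM₁) + rank (ΔM₂) ≥ b₁ + b₂ ≥ d_f`. Distinct indices give distinct upper left blocks,
which makes the parametrisation by `(r, M₃)` injective and yields the cardinality.
-/

open Matrix Module

theorem Submodule.finrank_map_add_finrank_inf_ker {K V V' : Type*} [DivisionRing K]
    [AddCommGroup V] [Module K V] [FiniteDimensional K V] [AddCommGroup V'] [Module K V']
    (f : V →ₗ[K] V') (W : Submodule K V) :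
    finrank K (W.map f) + finrank K ↥(W ⊓ LinearMap.ker f) = finrank K W := by
  have hker : (LinearMap.ker f).comap W.subtype = (W ⊓ LinearMap.ker f).comap W.subtype := by
    rw [Submodule.comap_inf, Submodule.comap_subtype_self, top_inf_eq]
  rw [← (Submodule.comapSubtypeEquivOfLe inf_le_left).finrank_eq, ← hker,
    ← LinearMap.ker_domRestrict, ← LinearMap.range_domRestrict]
  exact LinearMap.finrank_range_add_finrank_ker _

namespace Matrix

theorem fromBlocks_sub {α : Type*} [Sub α] {l m n o : Type*}
    (A A' : Matrix n l α) (B B' : Matrix n m α) (C C' : Matrix o l α) (D D' : Matrix o m α) :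
    fromBlocks A B C D - fromBlocks A' B' C' D' =
      fromBlocks (A - A') (B - B') (C - C') (D - D') := by
  ext (i | i) (j | j) <;> rfl

theorem rank_le_rank_fromBlocks₁₂ {R : Type*} [CommRing R] [StrongRankCondition R]
    {l m n o : Type*} [Fintype l] [Fintype m]
    (A : Matrix n l R) (B : Matrix n m R) (C : Matrix o l R) (D : Matrix o m R) :
    B.rank ≤ (fromBlocks A B C D).rank :=
  rank_submatrix_le (fromBlocks A B C D) Sum.inl Sum.inr

/-- Projecting the column space onto the lower coordinates gives the column space of `D`, while
the kernel of that projection still contains the column space of `A` in the upper coordinates. -/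
theorem rank_add_rank_le_rank_fromBlocks_zero₂₁ {F : Type*} [Field F] {m₁ m₂ n₁ n₂ : Type*}
    [Fintype m₁] [Fintype m₂] [Fintype n₁] [Fintype n₂] (A : Matrix m₁ n₁ F) (B : Matrix m₁ n₂ F)
    (D : Matrix m₂ n₂ F) : A.rank + D.rank ≤ (fromBlocks A B 0 D).rank := by
  set W := LinearMap.range (fromBlocks A B 0 D).mulVecLin
  set π := LinearMap.funLeft F F (Sum.inr : m₂ → m₁ ⊕ m₂)
  have hD : W.map π = LinearMap.range D.mulVecLin := by
    have : π ∘ₗ (fromBlocks A B 0 D).mulVecLin =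
        D.mulVecLin ∘ₗ LinearMap.funLeft F F Sum.inr := by
      ext x i
      simp [π, fromBlocks_mulVec, LinearMap.funLeft]
    rw [← LinearMap.range_comp, this, LinearMap.range_comp_of_range_eq_top]
    exact LinearMap.range_eq_top.2
      (LinearMap.funLeft_surjective_of_injective _ _ _ Sum.inr_injective)
  have hA : LinearMap.range A.mulVecLin ≤
      (W ⊓ LinearMap.ker π).map (LinearMap.funLeft F F Sum.inl) := by
    rintro _ ⟨x, rfl⟩
    refine ⟨fromBlocks A B 0 D *ᵥ Sum.elim x 0, ⟨⟨_, rfl⟩, ?_⟩, ?_⟩ <;> ext i <;>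
      simp [π, fromBlocks_mulVec]
  have hAW : A.rank ≤ finrank F ↥(W ⊓ LinearMap.ker π) :=
    (Submodule.finrank_mono hA).trans (Submodule.finrank_map_le _ _)
  calc A.rank + D.rank ≤ finrank F ↥(W.map π) + finrank F ↥(W ⊓ LinearMap.ker π) := by
        rw [add_comm, hD]; exact Nat.add_le_add_left hAW _
    _ = (fromBlocks A B 0 D).rank := Submodule.finrank_map_add_finrank_inf_ker π W

end Matrix

theorem fdrm_middle_case_general
    (F : Type*) [Field F] (u1 u2 p m b1 b2 df s : ℕ)
    (hb : df ≤ b1 + b2)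
    (M1f : Fin s → Matrix (Fin u1) (Fin p) F)
    (M2f : Fin s → Matrix (Fin u2) (Fin m) F)
    (hM1f : ∀ r r', r ≠ r' → M1f r ≠ M1f r' ∧ b1 ≤ (M1f r - M1f r').rank)
    (hM2f : ∀ r r', r ≠ r' → M2f r ≠ M2f r' ∧ b2 ≤ (M2f r - M2f r').rank)
    (𝓜3 : Set (Matrix (Fin u1) (Fin m) F))
    (h𝓜3 : ∀ A ∈ 𝓜3, ∀ B ∈ 𝓜3, A ≠ B → df ≤ (A - B).rank) :
    let 𝓜 : Set (Matrix (Fin u1 ⊕ Fin u2) (Fin p ⊕ Fin m) F) :=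
      {X | ∃ r : Fin s, ∃ M3 ∈ 𝓜3, X = Matrix.fromBlocks (M1f r) M3 0 (M2f r)}
    𝓜.ncard = s * 𝓜3.ncard ∧
    (∀ X ∈ 𝓜, ∀ Y ∈ 𝓜, X ≠ Y → df ≤ (X - Y).rank) := by
  intro 𝓜
  have hM1 : Function.Injective M1f := fun r r' h => by_contra fun hr => (hM1f r r' hr).1 h
  set f := fun q : Fin s × Matrix (Fin u1) (Fin m) F => fromBlocks (M1f q.1) q.2 0 (M2f q.1)
  have hf : Function.Injective f := by
    rintro ⟨r, A⟩ ⟨r', B⟩ h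
    obtain ⟨h₁, h₂, -⟩ := fromBlocks_inj.1 h
    exact Prod.ext (hM1 h₁) h₂
  have h𝓜 : 𝓜 = f '' (Set.univ ×ˢ 𝓜3) := by
    ext X
    simp [𝓜, f, eq_comm]
  refine ⟨by rw [h𝓜, Set.ncard_image_of_injective _ hf, Set.ncard_prod, Set.ncard_univ,
    Nat.card_fin], ?_⟩
  rintro _ ⟨r, A, hA, rfl⟩ _ ⟨r', B, hB, rfl⟩ hne
  rw [fromBlocks_sub, sub_zero]
  by_cases hr : r = r'
  · subst hr
    exact (h𝓜3 A hA B hB (by rintro rfl; exact hne rfl)).trans (rank_le_rank_fromBlocks₁₂ ..)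
  · calc df ≤ b1 + b2 := hb
      _ ≤ (M1f r - M1f r').rank + (M2f r - M2f r').rank :=
        Nat.add_le_add (hM1f r r' hr).2 (hM2f r r' hr).2
      _ ≤ _ := rank_add_rank_le_rank_fromBlocks_zero₂₁ ..

/-- Lemma 3.2, middle case: the union over `r` of block matrices
`( M1^r, M3 ; 0, M2^r )`, where the families `M1^r`, `M2^r` have pairwise rank
distances at least `b1, b2` with `b1 + b2 ≥ d_f` and `M3` ranges over a rank metric
code of minimum distance `d_f`, has cardinality `s·|M3|` and minimum rank distance
at least `d_f`. -/
theorem fdrm_middle_case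
    (F : Type*) [Field F] [Fintype F] (u1 u2 p m b1 b2 df s : ℕ)
    (hu1 : 0 < u1) (hu2 : 0 < u2) (hp : 0 < p) (hm : 0 < m)
    (hb1 : 0 < b1) (hb2 : 0 < b2) (hdf : 0 < df) (hs : 0 < s)
    (hb : df ≤ b1 + b2)
    (M1f : Fin s → Matrix (Fin u1) (Fin p) F)
    (M2f : Fin s → Matrix (Fin u2) (Fin m) F)
    (hM1f : ∀ r r', r ≠ r' → M1f r ≠ M1f r' ∧ b1 ≤ (M1f r - M1f r').rank)
    (hM2f : ∀ r r', r ≠ r' → M2f r ≠ M2f r' ∧ b2 ≤ (M2f r - M2f r').rank)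
    (𝓜3 : Set (Matrix (Fin u1) (Fin m) F))
    (h𝓜3 : ∀ A ∈ 𝓜3, ∀ B ∈ 𝓜3, A ≠ B → df ≤ (A - B).rank) :
    let 𝓜 : Set (Matrix (Fin u1 ⊕ Fin u2) (Fin p ⊕ Fin m) F) :=
      {X | ∃ r : Fin s, ∃ M3 ∈ 𝓜3, X = Matrix.fromBlocks (M1f r) M3 0 (M2f r)}
    𝓜.ncard = s * 𝓜3.ncard ∧
    (∀ X ∈ 𝓜, ∀ Y ∈ 𝓜, X ≠ Y → df ≤ (X - Y).rank) :=
  fdrm_middle_case_general F u1 u2 p m b1 b2 df s hb M1f M2f hM1f hM2f 𝓜3 h𝓜3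
end

section
/- Let F be a finite field, let d be an even positive integer, and let n = δ1 + δ2, k = u1 + u2, with nonnegative integers Δ, p = δ1 − Δ − u1 ≥ 0, m = δ2 − u2 ≥ 0, u1 ≥ d/2 and u2 ≥ d/2. For u1 × p matrices M_1, u1 × m matrices M_3 and u2 × m matrices M_2 over F, let L(M_1, M_3, M_2) ⊆ F^n denote the row space of the k × n block matrix with row blocks u1, u2 and column blocks Δ, u1, p, u2, m given by ( 0, I_{u1}, M_1, 0, M_3 ; 0, 0, 0, I_{u2}, M_2 ). (i) If M is a set of such triples whose associated k × (p+m) matrices ( M_1, M_3 ; 0, M_2 ) have pairwise rank distance ≥ d/2, then the subspaces L(M_1, M_3, M_2) are distinct k-dimensional subspaces of F^n with pairwise subspace distance ≥ d. (ii) Let S1 ⊆ F^n be the subspace of vectors whose first δ1 coordinates are zero and S2 the subspace of vectors whose last δ2 coordinates are zero; then for W = L(M_1, M_3, M_2) one has dim(W ∩ S1) = u2 ≥ d/2 and dim(W ∩ S2) = u1 − rank(M_3); in particular, if rank(M_3) ≤ u1 − d/2 then dim(W ∩ S2) ≥ d/2. -/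
open Matrix

/-- The lifted generator matrix `( 0, I_{u1}, M1, 0, M3 ; 0, 0, 0, I_{u2}, M2 )` with
row blocks `u1, u2` and column blocks `Δ, u1, p, u2, m`. -/
def L13 {F : Type*} [Field F] {Δ u1 p u2 m : ℕ}
    (M1 : Matrix (Fin u1) (Fin p) F) (M3 : Matrix (Fin u1) (Fin m) F)
    (M2 : Matrix (Fin u2) (Fin m) F) :
    Matrix (Fin u1 ⊕ Fin u2) ((Fin Δ ⊕ (Fin u1 ⊕ Fin p)) ⊕ (Fin u2 ⊕ Fin m)) F :=
  Matrix.fromBlocks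
    (Matrix.fromCols 0 (Matrix.fromCols 1 M1)) (Matrix.fromCols 0 M3)
    0 (Matrix.fromCols 1 M2)

/-- `S1`: the subspace of vectors whose first `δ1 = Δ + u1 + p` coordinates are zero. -/
noncomputable def S1' (F : Type*) [Field F] (Δ u1 p u2 m : ℕ) :
    Submodule F ((Fin Δ ⊕ (Fin u1 ⊕ Fin p)) ⊕ (Fin u2 ⊕ Fin m) → F) :=
  LinearMap.ker (LinearMap.funLeft F F
    (Sum.inl : Fin Δ ⊕ (Fin u1 ⊕ Fin p) → (Fin Δ ⊕ (Fin u1 ⊕ Fin p)) ⊕ (Fin u2 ⊕ Fin m)))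

/-- `S2`: the subspace of vectors whose last `δ2 = u2 + m` coordinates are zero. -/
noncomputable def S2' (F : Type*) [Field F] (Δ u1 p u2 m : ℕ) :
    Submodule F ((Fin Δ ⊕ (Fin u1 ⊕ Fin p)) ⊕ (Fin u2 ⊕ Fin m) → F) :=
  LinearMap.ker (LinearMap.funLeft F F
    (Sum.inr : Fin u2 ⊕ Fin m → (Fin Δ ⊕ (Fin u1 ⊕ Fin p)) ⊕ (Fin u2 ⊕ Fin m)))

/-!
All lifted matrices carry the identity in the same pivot columns, so a vector of a row space
determines its coefficient vector. Hence two row spaces meet in the image of the left kernel of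
the difference of their generator matrices; as that difference vanishes off the data columns, its
rank is the rank distance of the underlying matrices. In the same way `W ⊓ S1` and `W ⊓ S2` are
images of the left kernels of the column blocks on which `S1`, `S2` vanish: the first consists of
the coefficient vectors supported on the last `u2` rows, the second is the left kernel of `M3`
padded by zeros.
-/

namespace Matrix

variable {F : Type*} [Field F] {ι κ n : Type*} [Fintype ι]

theorem finrank_rowSpace [Fintype n] (A : Matrix ι n F) :
    Module.finrank F (rowSpace A) = A.rank := by
  rw [rank_eq_finrank_span_row, rowSpace, range_vecMulLinear]

theorem rank_add_finrank_ker_vecMulLinear [Fintype n] (A : Matrix ι n F) :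
    A.rank + Module.finrank F (LinearMap.ker A.vecMulLinear) = Fintype.card ι := by
  rw [← finrank_rowSpace, rowSpace, LinearMap.finrank_range_add_finrank_ker,
    Module.finrank_fintype_fun_eq_card]

theorem vecMul_submatrix_id (x : ι → F) (A : Matrix ι n F) (c : κ → n) :
    x ᵥ* A.submatrix id c = (x ᵥ* A) ∘ c :=
  rfl

theorem rowSpace_inf_ker_funLeft (G : Matrix ι n F) (c : κ → n) :
    rowSpace G ⊓ LinearMap.ker (LinearMap.funLeft F F c) =
      (LinearMap.ker (G.submatrix id c).vecMulLinear).map G.vecMulLinear := by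
  rw [rowSpace, ← Submodule.map_comap_eq, ← LinearMap.ker_comp]
  rfl

theorem finrank_rowSpace_inf_ker_funLeft {G : Matrix ι n F}
    (hG : Function.Injective G.vecMulLinear) (c : κ → n) :
    Module.finrank F ↥(rowSpace G ⊓ LinearMap.ker (LinearMap.funLeft F F c)) =
      Module.finrank F (LinearMap.ker (G.submatrix id c).vecMulLinear) := by
  rw [rowSpace_inf_ker_funLeft, (Submodule.equivMapOfInjective _ hG _).finrank_eq]

theorem rank_submatrix_id_of_forall_notMem_range [Fintype n] [Fintype κ] (A : Matrix ι n F)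
    {c : κ → n} (hA : ∀ i j, j ∉ Set.range c → A i j = 0) :
    (A.submatrix id c).rank = A.rank := by
  have hker : LinearMap.ker (A.submatrix id c).vecMulLinear = LinearMap.ker A.vecMulLinear := by
    ext x
    simp only [LinearMap.mem_ker, vecMulLinear_apply, vecMul_submatrix_id]
    refine ⟨fun hx => funext fun j => ?_, fun hx => by rw [hx]; rfl⟩
    by_cases hj : j ∈ Set.range c
    · obtain ⟨k, rfl⟩ := hj
      exact congrFun hx k
    · simp [vecMul, dotProduct, hA _ j hj]
  have h := rank_add_finrank_ker_vecMulLinear (A.submatrix id c)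
  rw [hker, ← rank_add_finrank_ker_vecMulLinear A] at h
  omega

variable [DecidableEq ι]

theorem vecMulLinear_injective_of_submatrix_eq_one {G : Matrix ι n F} {c : ι → n}
    (hG : G.submatrix id c = 1) : Function.Injective G.vecMulLinear := fun x y hxy => by
  simpa [← vecMul_submatrix_id, hG] using congrArg (· ∘ c) hxy

theorem finrank_rowSpace_of_submatrix_eq_one {G : Matrix ι n F} {c : ι → n}
    (hG : G.submatrix id c = 1) : Module.finrank F (rowSpace G) = Fintype.card ι := by
  rw [rowSpace, LinearMap.finrank_range_of_inj (vecMulLinear_injective_of_submatrix_eq_one hG),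
    Module.finrank_fintype_fun_eq_card]

theorem rowSpace_inf_rowSpace_of_submatrix_eq_one {G G' : Matrix ι n F} {c : ι → n}
    (hG : G.submatrix id c = 1) (hG' : G'.submatrix id c = 1) :
    rowSpace G ⊓ rowSpace G' = (LinearMap.ker (G - G').vecMulLinear).map G.vecMulLinear := by
  ext v
  simp only [rowSpace, Submodule.mem_inf, LinearMap.mem_range, Submodule.mem_map,
    LinearMap.mem_ker, vecMulLinear_apply, vecMul_sub, sub_eq_zero]
  constructor
  · rintro ⟨⟨x, rfl⟩, y, hy⟩
    have hxy : y = x := by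
      simpa [← vecMul_submatrix_id, hG, hG'] using congrArg (· ∘ c) hy
    exact ⟨x, by rw [← hxy, hy, hxy], rfl⟩
  · rintro ⟨x, hx, rfl⟩
    exact ⟨⟨x, rfl⟩, x, hx.symm⟩

theorem finrank_rowSpace_inf_rowSpace_add_rank_sub [Fintype n] {G G' : Matrix ι n F}
    {c : ι → n} (hG : G.submatrix id c = 1) (hG' : G'.submatrix id c = 1) :
    Module.finrank F ↥(rowSpace G ⊓ rowSpace G') + (G - G').rank = Fintype.card ι := by
  rw [rowSpace_inf_rowSpace_of_submatrix_eq_one hG hG', ← (Submodule.equivMapOfInjective _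
    (vecMulLinear_injective_of_submatrix_eq_one hG) _).finrank_eq, add_comm,
    rank_add_finrank_ker_vecMulLinear]

end Matrix

theorem LinearMap.finrank_ker_funLeft_inl (R α β : Type*) [Field R] [Fintype α] [Fintype β] :
    Module.finrank R (LinearMap.ker (LinearMap.funLeft R R (Sum.inl : α → α ⊕ β))) =
      Fintype.card β := by
  have h := (LinearMap.funLeft R R (Sum.inl : α → α ⊕ β)).finrank_range_add_finrank_ker
  rw [LinearMap.range_eq_top.2 (LinearMap.funLeft_surjective_of_injective _ _ _ Sum.inl_injective),
    finrank_top] at h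
  simp only [Module.finrank_fintype_fun_eq_card, Fintype.card_sum] at h
  omega

theorem Matrix.finrank_ker_vecMulLinear_fromBlocks_zero_one {F ι ι' κ : Type*} [Field F]
    [Fintype ι] [Fintype ι'] [DecidableEq ι'] (B : Matrix ι κ F) (D : Matrix ι' κ F) :
    Module.finrank F (LinearMap.ker (fromBlocks (0 : Matrix ι ι' F) B 1 D).vecMulLinear) =
      Module.finrank F (LinearMap.ker B.vecMulLinear) := by
  let extendByZero : (ι → F) →ₗ[F] (ι ⊕ ι' → F) :=
    (LinearEquiv.sumArrowLequivProdArrow ι ι' F F).symm.toLinearMap ∘ₗ LinearMap.inl F _ _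
  have hinj : Function.Injective extendByZero := fun x y h =>
    funext fun i => congrFun h (Sum.inl i)
  suffices hker : LinearMap.ker (fromBlocks (0 : Matrix ι ι' F) B 1 D).vecMulLinear =
      (LinearMap.ker B.vecMulLinear).map extendByZero by
    rw [hker, (Submodule.equivMapOfInjective _ hinj _).finrank_eq]
  ext x
  simp only [LinearMap.mem_ker, Submodule.mem_map, vecMulLinear_apply, vecMul_fromBlocks,
    vecMul_zero, vecMul_one, zero_add, ← Sum.elim_zero_zero, Sum.elim_eq_iff]
  constructor
  · rintro ⟨hr, hB⟩
    refine ⟨x ∘ Sum.inl, by simpa [hr] using hB, ?_⟩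
    ext (i | i)
    · rfl
    · exact (congrFun hr i).symm
  · rintro ⟨y, hy, rfl⟩
    exact ⟨rfl, show y ᵥ* B + 0 ᵥ* D = 0 by simpa using hy⟩

namespace L13

variable {F : Type*} [Field F] {Δ u1 p u2 m : ℕ}

def pivotCols : Fin u1 ⊕ Fin u2 → (Fin Δ ⊕ (Fin u1 ⊕ Fin p)) ⊕ (Fin u2 ⊕ Fin m) :=
  Sum.map (Sum.inr ∘ Sum.inl) Sum.inl

def dataCols : Fin p ⊕ Fin m → (Fin Δ ⊕ (Fin u1 ⊕ Fin p)) ⊕ (Fin u2 ⊕ Fin m) :=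
  Sum.map (Sum.inr ∘ Sum.inr) Sum.inr

theorem submatrix_pivotCols (M1 : Matrix (Fin u1) (Fin p) F) (M3 : Matrix (Fin u1) (Fin m) F)
    (M2 : Matrix (Fin u2) (Fin m) F) :
    (L13 (Δ := Δ) M1 M3 M2).submatrix id pivotCols = 1 := by
  ext (i | i) (j | j) <;> simp [L13, pivotCols, Matrix.one_apply]

theorem submatrix_dataCols (M1 : Matrix (Fin u1) (Fin p) F) (M3 : Matrix (Fin u1) (Fin m) F)
    (M2 : Matrix (Fin u2) (Fin m) F) :
    (L13 (Δ := Δ) M1 M3 M2).submatrix id dataCols = Matrix.fromBlocks M1 M3 0 M2 := by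
  ext (i | i) (j | j) <;> rfl

theorem submatrix_inr (M1 : Matrix (Fin u1) (Fin p) F) (M3 : Matrix (Fin u1) (Fin m) F)
    (M2 : Matrix (Fin u2) (Fin m) F) :
    (L13 (Δ := Δ) M1 M3 M2).submatrix id Sum.inr = Matrix.fromBlocks 0 M3 1 M2 := by
  ext (i | i) (j | j) <;> rfl

theorem ker_vecMulLinear_submatrix_inl (M1 : Matrix (Fin u1) (Fin p) F)
    (M3 : Matrix (Fin u1) (Fin m) F) (M2 : Matrix (Fin u2) (Fin m) F) :
    LinearMap.ker ((L13 (Δ := Δ) M1 M3 M2).submatrix id Sum.inl).vecMulLinear =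
      LinearMap.ker (LinearMap.funLeft F F Sum.inl) := by
  ext x
  simp only [L13, LinearMap.mem_ker, LinearMap.flip_apply, Matrix.vecMulBilin_apply,
    Matrix.vecMul_submatrix_id, Matrix.vecMul_fromBlocks, Matrix.vecMul_fromCols,
    Matrix.vecMul_zero, Matrix.vecMul_one, add_zero, Sum.elim_comp_inl, funext_iff,
    Pi.zero_apply, Sum.forall, Sum.elim_inl, implies_true, Sum.elim_inr, Function.comp_apply,
    true_and, LinearMap.funLeft_apply, and_iff_left_iff_imp]
  intro h
  simp [show x ∘ Sum.inl = 0 from funext h]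

theorem injective :
    Function.Injective fun t : Matrix (Fin u1) (Fin p) F × Matrix (Fin u1) (Fin m) F ×
      Matrix (Fin u2) (Fin m) F => L13 (Δ := Δ) t.1 t.2.1 t.2.2 := by
  rintro ⟨A1, A3, A2⟩ ⟨B1, B3, B2⟩ h
  have h' := congrArg (·.submatrix id dataCols) h
  simp only [submatrix_dataCols, Matrix.fromBlocks_inj] at h'
  obtain ⟨rfl, rfl, -, rfl⟩ := h'
  rfl

theorem rank_sub (A1 B1 : Matrix (Fin u1) (Fin p) F) (A3 B3 : Matrix (Fin u1) (Fin m) F)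
    (A2 B2 : Matrix (Fin u2) (Fin m) F) :
    (L13 (Δ := Δ) A1 A3 A2 - L13 B1 B3 B2).rank =
      (Matrix.fromBlocks A1 A3 0 A2 - Matrix.fromBlocks B1 B3 0 B2).rank := by
  rw [← submatrix_dataCols, ← submatrix_dataCols]
  refine (Matrix.rank_submatrix_id_of_forall_notMem_range (c := dataCols) _ ?_).symm
  rintro (i | i) ((j | j | j) | (j | j)) hj
  all_goals simp_all [L13, dataCols]

theorem finrank_rowSpace_inf_S1' (M1 : Matrix (Fin u1) (Fin p) F)
    (M3 : Matrix (Fin u1) (Fin m) F) (M2 : Matrix (Fin u2) (Fin m) F) :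
    Module.finrank F ↥(rowSpace (L13 (Δ := Δ) M1 M3 M2) ⊓ S1' F Δ u1 p u2 m) = u2 := by
  rw [S1', Matrix.finrank_rowSpace_inf_ker_funLeft
      (Matrix.vecMulLinear_injective_of_submatrix_eq_one (submatrix_pivotCols M1 M3 M2)),
    ker_vecMulLinear_submatrix_inl, LinearMap.finrank_ker_funLeft_inl, Fintype.card_fin]

theorem finrank_rowSpace_inf_S2' (M1 : Matrix (Fin u1) (Fin p) F)
    (M3 : Matrix (Fin u1) (Fin m) F) (M2 : Matrix (Fin u2) (Fin m) F) :
    Module.finrank F ↥(rowSpace (L13 (Δ := Δ) M1 M3 M2) ⊓ S2' F Δ u1 p u2 m) =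
      u1 - M3.rank := by
  rw [S2', Matrix.finrank_rowSpace_inf_ker_funLeft
      (Matrix.vecMulLinear_injective_of_submatrix_eq_one (submatrix_pivotCols M1 M3 M2)),
    submatrix_inr, Matrix.finrank_ker_vecMulLinear_fromBlocks_zero_one]
  have := M3.rank_add_finrank_ker_vecMulLinear
  rw [Fintype.card_fin] at this
  omega

end L13

theorem lifted_fdrm_inserting_general
    (F : Type*) [Field F] (d Δ u1 p u2 m k : ℕ)
    (hd2 : 2 ∣ d) (hk : u1 + u2 = k)
    (hu1 : d / 2 ≤ u1) :
    -- (i)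
    (∀ T : Set (Matrix (Fin u1) (Fin p) F ×
        Matrix (Fin u1) (Fin m) F × Matrix (Fin u2) (Fin m) F),
      (∀ t ∈ T, ∀ t' ∈ T, t ≠ t' →
        d / 2 ≤ (Matrix.fromBlocks t.1 t.2.1 0 t.2.2 -
          Matrix.fromBlocks t'.1 t'.2.1 0 t'.2.2).rank) →
      (∀ t ∈ T, ∀ t' ∈ T, t ≠ t' →
        (L13 (Δ := Δ) t.1 t.2.1 t.2.2 : Matrix _ _ F) ≠ L13 (Δ := Δ) t'.1 t'.2.1 t'.2.2) ∧
      (∀ t ∈ T, Module.finrank F ↥(rowSpace (L13 (Δ := Δ) t.1 t.2.1 t.2.2)) = k) ∧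
      (∀ t ∈ T, ∀ t' ∈ T, t ≠ t' →
        d ≤ 2 * k - 2 * Module.finrank F
          ↥(rowSpace (L13 (Δ := Δ) t.1 t.2.1 t.2.2) ⊓
            rowSpace (L13 (Δ := Δ) t'.1 t'.2.1 t'.2.2)))) ∧
    -- (ii)
    (∀ (M1 : Matrix (Fin u1) (Fin p) F) (M3 : Matrix (Fin u1) (Fin m) F)
        (M2 : Matrix (Fin u2) (Fin m) F),
      Module.finrank F ↥(rowSpace (L13 (Δ := Δ) M1 M3 M2) ⊓ S1' F Δ u1 p u2 m) = u2 ∧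
      Module.finrank F ↥(rowSpace (L13 (Δ := Δ) M1 M3 M2) ⊓ S2' F Δ u1 p u2 m)
        = u1 - M3.rank ∧
      (M3.rank ≤ u1 - d / 2 →
        d / 2 ≤ Module.finrank F
          ↥(rowSpace (L13 (Δ := Δ) M1 M3 M2) ⊓ S2' F Δ u1 p u2 m))) := by
  refine ⟨fun T hT => ⟨?_, ?_, ?_⟩, fun M1 M3 M2 => ?_⟩
  · exact fun t _ t' _ hne h => hne (L13.injective h)
  · intro t _
    rw [Matrix.finrank_rowSpace_of_submatrix_eq_one (L13.submatrix_pivotCols _ _ _),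
      Fintype.card_sum, Fintype.card_fin, Fintype.card_fin, hk]
  · intro t ht t' ht' hne
    have hdim := Matrix.finrank_rowSpace_inf_rowSpace_add_rank_sub
      (L13.submatrix_pivotCols (Δ := Δ) t.1 t.2.1 t.2.2)
      (L13.submatrix_pivotCols t'.1 t'.2.1 t'.2.2)
    rw [L13.rank_sub, Fintype.card_sum, Fintype.card_fin, Fintype.card_fin] at hdim
    have hrank := hT t ht t' ht' hne
    omega
  · rw [L13.finrank_rowSpace_inf_S1', L13.finrank_rowSpace_inf_S2']
    exact ⟨rfl, rfl, by omega⟩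

/-- lifting Ferrers-diagram rank metric codes with the special-form
identifying vector (Lemma 3.6): (i) the lifted subspaces are distinct `k`-dimensional
subspaces with pairwise subspace distance `≥ d`; (ii) they meet `S1` in dimension `u2`
and `S2` in dimension `u1 − rank M3`. -/
theorem lifted_fdrm_inserting
    (F : Type*) [Field F] [Fintype F] (d Δ u1 p u2 m k : ℕ)
    (hd : 0 < d) (hd2 : 2 ∣ d) (hk : u1 + u2 = k)
    (hu1 : d / 2 ≤ u1) (hu2 : d / 2 ≤ u2) :
    -- (i)
    (∀ T : Set (Matrix (Fin u1) (Fin p) F ×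
        Matrix (Fin u1) (Fin m) F × Matrix (Fin u2) (Fin m) F),
      (∀ t ∈ T, ∀ t' ∈ T, t ≠ t' →
        d / 2 ≤ (Matrix.fromBlocks t.1 t.2.1 0 t.2.2 -
          Matrix.fromBlocks t'.1 t'.2.1 0 t'.2.2).rank) →
      (∀ t ∈ T, ∀ t' ∈ T, t ≠ t' →
        (L13 (Δ := Δ) t.1 t.2.1 t.2.2 : Matrix _ _ F) ≠ L13 (Δ := Δ) t'.1 t'.2.1 t'.2.2) ∧
      (∀ t ∈ T, Module.finrank F ↥(rowSpace (L13 (Δ := Δ) t.1 t.2.1 t.2.2)) = k) ∧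
      (∀ t ∈ T, ∀ t' ∈ T, t ≠ t' →
        d ≤ 2 * k - 2 * Module.finrank F
          ↥(rowSpace (L13 (Δ := Δ) t.1 t.2.1 t.2.2) ⊓
            rowSpace (L13 (Δ := Δ) t'.1 t'.2.1 t'.2.2)))) ∧
    -- (ii)
    (∀ (M1 : Matrix (Fin u1) (Fin p) F) (M3 : Matrix (Fin u1) (Fin m) F)
        (M2 : Matrix (Fin u2) (Fin m) F),
      Module.finrank F ↥(rowSpace (L13 (Δ := Δ) M1 M3 M2) ⊓ S1' F Δ u1 p u2 m) = u2 ∧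
      Module.finrank F ↥(rowSpace (L13 (Δ := Δ) M1 M3 M2) ⊓ S2' F Δ u1 p u2 m)
        = u1 - M3.rank ∧
      (M3.rank ≤ u1 - d / 2 →
        d / 2 ≤ Module.finrank F
          ↥(rowSpace (L13 (Δ := Δ) M1 M3 M2) ⊓ S2' F Δ u1 p u2 m))) :=
  lifted_fdrm_inserting_general F d Δ u1 p u2 m k hd2 hk hu1
end
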